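/- For all 1 ≤ a, b, a', b' ≤ d, all 1 ≤ i, j ≤ ℓ', and all integers k, l ≥ 0, the commutator in End_ℂ(P) satisfies ⁅T_i(a,b;k), T_j(a',b';l)⁆ = δ_{i,j}·( δ_{a',b}·T_i(a,b';k+l) − δ_{a,b'}·T_i(a',b;k+l) ). (This is the bosonic y-variable part of Proposition 4.1 of the paper: the operators T_i(a,b;k) realize on the Fock space the commutation relations of the direct sum of Takiff algebras ⊕_{i=1}^{ℓ'} gl_d[t]/t^{γ_i} gl_d[t], i.e. [e_{ab}⊗t̄^k, e_{a'b'}⊗t̄^l] = δ_{a',b} e_{ab'}⊗t̄^{k+l} − δ_{a,b'} e_{a'b}⊗t̄^{k+l} within each block, with t̄^r = 0 for r ≥ γ_i.) -/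

import Mathlib

/-!
Writing `E(v, w) = y_v ∂_w`, the operator `T_i(a, b; k)` is `-∑_r E(y^b_r, y^a_{r+k})`. Since the
`y`'s commute, the `∂`'s commute and `⁅∂_w, y_v⁆ = δ_{wv}`, these polarization operators satisfy
`⁅E(v, w), E(v', w')⁆ = δ_{wv'} E(v, w') - δ_{w'v} E(v', w)`. Expanding the bracket of two
`T`'s bilinearly, the Kronecker deltas in the position indices collapse the double sum over `(r, s)`
to a single sum with shift `k + m`, cut off at `γ_i - k - m`. Operators of different blocks
involve disjoint sets of variables, so they commute.
-/

open MvPolynomial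

/-- Multiplication by the variable `v`, as a `ℂ`-linear endomorphism of the
polynomial ring. -/
noncomputable def mulOp {σ : Type*} (v : σ) :
    Module.End ℂ (MvPolynomial σ ℂ) :=
  LinearMap.mulLeft ℂ (X v)

/-- The partial derivative with respect to the variable `v`, as a `ℂ`-linear endomorphism
of the polynomial ring. -/
noncomputable def derOp {σ : Type*} (v : σ) :
    Module.End ℂ (MvPolynomial σ ℂ) :=
  (pderiv v).toLinearMap

/-- The operator `T_i(a, b; k) = -Σ_{r = l+1}^{l+γ-k} y^b_r ∘ ∂_{y^a_{r+k}}` on the bosonic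
Fock space `MvPolynomial (Fin d × Fin p) ℂ`, where `l = l_i` and `γ = γ_i` (indices of the
`y`-variables are written 0-based, so `r` runs over `l, l+1, …, l+γ-k-1`). -/
noncomputable def Takiff_T (d p : ℕ) (l γ : ℕ) (a b : Fin d) (k : ℕ) :
    Module.End ℂ (MvPolynomial (Fin d × Fin p) ℂ) :=
  - ∑ r ∈ Finset.range (γ - k),
      if h : l + r + k < p then
        mulOp (b, (⟨l + r, by omega⟩ : Fin p)) * derOp (a, (⟨l + r + k, h⟩ : Fin p))
      else 0


open Finset

lemma lie_sum_sum {R ι κ : Type*} [Ring R] (s : Finset ι) (t : Finset κ) (f : ι → R)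
    (g : κ → R) : ⁅∑ i ∈ s, f i, ∑ j ∈ t, g j⁆ = ∑ i ∈ s, ∑ j ∈ t, ⁅f i, g j⁆ := by
  simp only [Ring.lie_def, sum_mul_sum, sum_sub_distrib]
  rw [sum_comm (s := t)]

lemma neg_lie_neg {R : Type*} [Ring R] (x y : R) : ⁅-x, -y⁆ = ⁅x, y⁆ := by
  simp only [Ring.lie_def, neg_mul_neg]

lemma lie_mul_mul_of_commute {R : Type*} [Ring R] {x x' y y' : R} (hx : Commute x x')
    (hy : Commute y y') : ⁅x * y, x' * y'⁆ = x * ⁅y, x'⁆ * y' - x' * ⁅y', x⁆ * y := by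
  simp only [Ring.lie_def, mul_sub, sub_mul, mul_assoc]
  rw [← mul_assoc x x', hx.eq, ← hy.eq, mul_assoc]
  abel

section Polarization

variable {σ : Type*}

lemma commute_mulOp (v w : σ) : Commute (mulOp v) (mulOp (σ := σ) w) :=
  LinearMap.ext fun f => by
    simp only [mulOp, Module.End.mul_apply, LinearMap.mulLeft_apply]
    ring

lemma commute_derOp (v w : σ) : Commute (derOp v) (derOp (σ := σ) w) := by
  classical
  -- a commutator of derivations is a derivation, and this one kills every variable
  have h : ⁅pderiv v, pderiv w⁆ = (0 : Derivation ℂ (MvPolynomial σ ℂ) (MvPolynomial σ ℂ)) :=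
    derivation_ext fun i => by
      rw [Derivation.commutator_apply]
      simp [pderiv_X, Pi.single_apply, apply_ite (pderiv _)]
  rw [commute_iff_lie_eq, derOp, derOp, ← Derivation.commutator_coe_linear_map, h]
  rfl

lemma lie_derOp_mulOp [DecidableEq σ] (w v : σ) :
    ⁅derOp w, mulOp v⁆ = if w = v then (1 : Module.End ℂ (MvPolynomial σ ℂ)) else 0 := by
  refine LinearMap.ext fun f => ?_
  rcases eq_or_ne w v with rfl | h
  · simp [Ring.lie_def, derOp, mulOp]
  · simp [Ring.lie_def, derOp, mulOp, pderiv_X_of_ne h.symm, h]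

noncomputable def mulDerOp (v w : σ) : Module.End ℂ (MvPolynomial σ ℂ) :=
  mulOp v * derOp w

lemma lie_mulDerOp [DecidableEq σ] (v w v' w' : σ) :
    ⁅mulDerOp v w, mulDerOp v' w'⁆
      = (if w = v' then mulDerOp v w' else 0) - (if w' = v then mulDerOp v' w else 0) := by
  rw [mulDerOp, mulDerOp, lie_mul_mul_of_commute (commute_mulOp v v') (commute_derOp w w'),
    lie_derOp_mulOp, lie_derOp_mulOp]
  split_ifs <;> simp [mulDerOp]

lemma commute_mulDerOp_of_ne {v w v' w' : σ} (h : w ≠ v') (h' : w' ≠ v) :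
    Commute (mulDerOp v w) (mulDerOp v' w') := by
  classical
  rw [commute_iff_lie_eq, lie_mulDerOp, if_neg h, if_neg h', sub_zero]

end Polarization

lemma sum_range_sum_range_ite_add_eq {M : Type*} [AddCommMonoid M] (f : ℕ → ℕ → M)
    (G k m : ℕ) :
    ∑ r ∈ range (G - k), ∑ s ∈ range (G - m), (if r + k = s then f r s else 0)
      = ∑ r ∈ range (G - (k + m)), f r (r + k) := by
  simp_rw [sum_ite_eq, ← sum_filter]
  congr 1
  ext r
  simp only [mem_filter, mem_range]
  omega

section TakiffOp

variable {ι κ : Type*}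

noncomputable def takiffOp (u : ℕ → κ) (a b : ι) (G k : ℕ) :
    Module.End ℂ (MvPolynomial (ι × κ) ℂ) :=
  -∑ r ∈ range (G - k), mulDerOp (b, u r) (a, u (r + k))

lemma sum_range_sum_range_ite_mulDerOp [DecidableEq ι] [DecidableEq κ] {u : ℕ → κ} {G : ℕ}
    (hu : Set.InjOn u (Set.Iio G)) (a b a' b' : ι) (k m : ℕ) :
    ∑ r ∈ range (G - k), ∑ s ∈ range (G - m),
        (if (a, u (r + k)) = (b', u s) then mulDerOp (b, u r) (a', u (s + m)) else 0)
      = if a = b' then -takiffOp u a' b G (k + m) else 0 := by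
  split_ifs with hab
  · subst hab
    have hcond : ∀ r ∈ range (G - k), ∀ s ∈ range (G - m),
        (a, u (r + k)) = (a, u s) ↔ r + k = s := fun r hr s hs => by
      rw [mem_range] at hr hs
      rw [Prod.mk.injEq, hu.eq_iff (Set.mem_Iio.mpr (by omega)) (Set.mem_Iio.mpr (by omega))]
      exact and_iff_right rfl
    calc _ = ∑ r ∈ range (G - k), ∑ s ∈ range (G - m),
            (if r + k = s then mulDerOp (b, u r) (a', u (s + m)) else 0) :=
          sum_congr rfl fun r hr => sum_congr rfl fun s hs => if_congr (hcond r hr s hs) rfl rfl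
      _ = -takiffOp u a' b G (k + m) := by
          rw [sum_range_sum_range_ite_add_eq (fun r s => mulDerOp (b, u r) (a', u (s + m))),
            takiffOp, neg_neg]
          simp only [add_assoc]
  · exact sum_eq_zero fun r _ => sum_eq_zero fun s _ =>
      if_neg fun h => hab (congrArg Prod.fst h)

lemma lie_takiffOp [DecidableEq ι] [DecidableEq κ] {u : ℕ → κ} {G : ℕ}
    (hu : Set.InjOn u (Set.Iio G)) (a b a' b' : ι) (k m : ℕ) :
    ⁅takiffOp u a b G k, takiffOp u a' b' G m⁆
      = (if a' = b then takiffOp u a b' G (k + m) else 0)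
        - (if a = b' then takiffOp u a' b G (k + m) else 0) := by
  rw [takiffOp, takiffOp, neg_lie_neg]
  simp only [lie_sum_sum, lie_mulDerOp, sum_sub_distrib]
  rw [sum_range_sum_range_ite_mulDerOp hu, sum_comm,
    sum_range_sum_range_ite_mulDerOp hu, add_comm m k]
  split_ifs <;> abel

lemma commute_takiffOp {u u' : ℕ → κ} {G G' : ℕ} (h : ∀ r < G, ∀ s < G', u r ≠ u' s)
    (a b a' b' : ι) (k m : ℕ) :
    Commute (takiffOp u a b G k) (takiffOp u' a' b' G' m) :=
  .neg_left <| .neg_right <| .sum_left _ _ _ fun r hr => .sum_right _ _ _ fun s hs => by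
    rw [mem_range] at hr hs
    exact commute_mulDerOp_of_ne (fun e => h _ (by omega) _ (by omega) (congrArg Prod.snd e))
      (fun e => h _ (by omega) _ (by omega) (congrArg Prod.snd e).symm)

end TakiffOp

lemma injOn_ofNat_add {p L G : ℕ} [NeZero p] (h : L + G ≤ p) :
    Set.InjOn (fun r => Fin.ofNat p (L + r)) (Set.Iio G) := fun r hr s hs hrs => by
  simp only [Set.mem_Iio] at hr hs
  simpa [Fin.ext_iff, Nat.mod_eq_of_lt (show L + r < p by omega),
    Nat.mod_eq_of_lt (show L + s < p by omega)] using hrs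

lemma ofNat_add_ne_ofNat_add {p L G L' G' : ℕ} [NeZero p] (h : L + G ≤ p) (h' : L' + G' ≤ p)
    (hsep : L + G ≤ L' ∨ L' + G' ≤ L) :
    ∀ r < G, ∀ s < G', Fin.ofNat p (L + r) ≠ Fin.ofNat p (L' + s) := fun r hr s hs => by
  simp only [ne_eq, Fin.ext_iff, Fin.val_ofNat, Nat.mod_eq_of_lt (show L + r < p by omega),
    Nat.mod_eq_of_lt (show L' + s < p by omega)]
  omega

-- `Fin.ofNat p` reduces modulo `p`; it is only evaluated below `p` here.
lemma Takiff_T_eq_takiffOp {d p L G : ℕ} [NeZero p] (h : L + G ≤ p) (a b : Fin d) (k : ℕ) :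
    Takiff_T d p L G a b k = takiffOp (fun r => Fin.ofNat p (L + r)) a b G k := by
  rw [Takiff_T, takiffOp]
  congr 1
  refine sum_congr rfl fun r hr => ?_
  rw [mem_range] at hr
  rw [dif_pos (by omega), mulDerOp]
  congr
  all_goals rw [Nat.mod_eq_of_lt] <;> omega

lemma sum_Iio_add_le_sum_Iio {ι : Type*} [PartialOrder ι] [LocallyFiniteOrderBot ι] (γ : ι → ℕ)
    {i j : ι} (h : i < j) :
    ∑ s ∈ Iio i, γ s + γ i ≤ ∑ s ∈ Iio j, γ s := by
  rw [sum_Iio_add_eq_sum_Iic]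
  exact sum_le_sum_of_subset fun x hx => mem_Iio.mpr ((mem_Iic.mp hx).trans_lt h)

lemma sum_Iio_add_le_sum {ι : Type*} [PartialOrder ι] [LocallyFiniteOrderBot ι] [Fintype ι]
    (γ : ι → ℕ) (i : ι) :
    ∑ s ∈ Iio i, γ s + γ i ≤ ∑ s, γ s := by
  rw [sum_Iio_add_eq_sum_Iic]
  exact sum_le_sum_of_subset (subset_univ _)

theorem stmt6 (d ℓ' : ℕ)
    (γ : Fin ℓ' → ℕ) (hγ : ∀ i, 0 < γ i) (p : ℕ) (hp : p = ∑ i, γ i)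
    (l : Fin ℓ' → ℕ)
    (hl : ∀ i, l i = ∑ j ∈ Finset.univ.filter (fun j => j < i), γ j)
    (i j : Fin ℓ') (a b a' b' : Fin d) (k m : ℕ) :
    Takiff_T d p (l i) (γ i) a b k * Takiff_T d p (l j) (γ j) a' b' m
      - Takiff_T d p (l j) (γ j) a' b' m * Takiff_T d p (l i) (γ i) a b k
    = if i = j then
        (if a' = b then Takiff_T d p (l i) (γ i) a b' (k + m) else 0)
          - (if a = b' then Takiff_T d p (l i) (γ i) a' b (k + m) else 0)
      else 0 := by
  simp only [filter_gt_eq_Iio] at hl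
  have hblock : ∀ t, l t + γ t ≤ p := fun t => hl t ▸ hp ▸ sum_Iio_add_le_sum γ t
  have : NeZero p := ⟨by have := hblock i; have := hγ i; omega⟩
  rw [← Ring.lie_def]
  simp only [Takiff_T_eq_takiffOp (hblock _)]
  rcases eq_or_ne i j with rfl | hij
  · rw [if_pos rfl, lie_takiffOp (injOn_ofNat_add (hblock i))]
  · rw [if_neg hij]
    have hsep : l i + γ i ≤ l j ∨ l j + γ j ≤ l i := (lt_or_gt_of_ne hij).imp
      (fun h => hl i ▸ hl j ▸ sum_Iio_add_le_sum_Iio γ h)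
      (fun h => hl i ▸ hl j ▸ sum_Iio_add_le_sum_Iio γ h)
    exact commute_iff_lie_eq.mp
      (commute_takiffOp (ofNat_add_ne_ofNat_add (hblock i) (hblock j) hsep) a b a' b' k m)
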